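/- Let F = {f₁,...,f_s} ⊆ K[x₁,...,x_m] be nonzero polynomials with deg(f_i) ≤ d, and let ⟨LT(B₀)⟩ ⊊ ⟨LT(B₁)⟩ ⊊ ... ⊊ ⟨LT(B_r)⟩ be the strictly ascending chain of leading-term ideals arising from Buchberger's algorithm, terminating when B_r is a Gröbner basis of ⟨F⟩. Then r + 1 ≤ B(m, n ↦ 3ⁿ·d), where B is any function with the bounding property for antichains in ℕ^m. -/

import Mathlib

open MvPolynomial
open scoped Classical

/-- The leading monomial (exponent vector) of a polynomial with respect to a
monomial order `ord`; `lmon ord 0 = 0` by convention. -/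
noncomputable def lmon {K : Type*} [Field K] {m : ℕ}
    (ord : LinearOrder (Fin m →₀ ℕ)) (f : MvPolynomial (Fin m) K) : Fin m →₀ ℕ :=
  if h : f = 0 then 0 else
    @Finset.max' _ ord f.support (MvPolynomial.support_nonempty.mpr h)

/-- The S-polynomial S(f,g) = (x^γ/lt(f))·f − (x^γ/lt(g))·g, where
x^γ = lcm(lm f, lm g), i.e. γ = lm f ⊔ lm g (componentwise max). -/
noncomputable def spoly {K : Type*} [Field K] {m : ℕ}
    (ord : LinearOrder (Fin m →₀ ℕ)) (f g : MvPolynomial (Fin m) K) :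
    MvPolynomial (Fin m) K :=
  (monomial ((lmon ord f ⊔ lmon ord g) - lmon ord f)) (f.coeff (lmon ord f))⁻¹ * f -
    (monomial ((lmon ord f ⊔ lmon ord g) - lmon ord g)) (g.coeff (lmon ord g))⁻¹ * g

/-- `IsRemainder ord f B r`: `r` is a possible remainder of `f` on multivariate
division by the finite set `B`: `f = Σ_{g ∈ B} a_g g + r` with
`lm(a_g g) ≼ lm f` for all nonzero summands, and `r` reduced modulo `B`
(no leading monomial of an element of `B` divides a monomial of `r`). -/
def IsRemainder {K : Type*} [Field K] {m : ℕ}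
    (ord : LinearOrder (Fin m →₀ ℕ)) (f : MvPolynomial (Fin m) K)
    (B : Finset (MvPolynomial (Fin m) K)) (r : MvPolynomial (Fin m) K) : Prop :=
  ∃ a : MvPolynomial (Fin m) K → MvPolynomial (Fin m) K,
    f = (∑ g ∈ B, a g * g) + r ∧
    (∀ g ∈ B, a g * g ≠ 0 → ord.le (lmon ord (a g * g)) (lmon ord f)) ∧
    (∀ g ∈ B, g ≠ 0 → ∀ β ∈ r.support, ¬ lmon ord g ≤ β)

/-- The ideal generated by the leading terms of the elements of a finite set. -/
noncomputable def ltIdeal {K : Type*} [Field K] {m : ℕ}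
    (ord : LinearOrder (Fin m →₀ ℕ)) (B : Finset (MvPolynomial (Fin m) K)) :
    Ideal (MvPolynomial (Fin m) K) :=
  Ideal.span ((fun b : MvPolynomial (Fin m) K =>
    (monomial (lmon ord b)) (b.coeff (lmon ord b))) '' (B : Set (MvPolynomial (Fin m) K)))

/-!
Every strict step ⟨LT(Bₙ)⟩ ⊊ ⟨LT(Bₙ₊₁)⟩ needs a new element of Bₙ₊₁, which is a nonzero
remainder modulo Bₙ, so its leading monomial is divisible by no leading monomial of Bₙ.
Starting from any nonzero element of F, the leading monomials of these new elements form an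
antichain of length r + 1 in ℕ^m. Its i-th entry has degree at most 3ⁱd: an S-polynomial of two
elements of degree ≤ 3ⁿd has degree ≤ 2·3ⁿd, and in a graded order division does not raise
the degree.
-/

section LeadingMonomial

variable {K : Type*} [Field K] {m : ℕ} (ord : LinearOrder (Fin m →₀ ℕ))

lemma lmon_mem_support {f : MvPolynomial (Fin m) K} (hf : f ≠ 0) :
    lmon ord f ∈ f.support := by
  rw [lmon, dif_neg hf]
  exact @Finset.max'_mem _ ord _ _

lemma le_lmon {f : MvPolynomial (Fin m) K} {s : Fin m →₀ ℕ} (hs : s ∈ f.support) :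
    ord.le s (lmon ord f) := by
  have hf : f ≠ 0 := by rintro rfl; simp at hs
  rw [lmon, dif_neg hf]
  exact @Finset.le_max' _ ord _ _ hs

lemma Finsupp.sum_id_eq_sum_univ (s : Fin m →₀ ℕ) : (s.sum fun _ e => e) = ∑ x, s x :=
  Finsupp.degree_eq_sum s

lemma sum_lmon_le_totalDegree (f : MvPolynomial (Fin m) K) :
    ∑ x, lmon ord f x ≤ f.totalDegree := by
  by_cases hf : f = 0
  · simp [hf, lmon]
  · rw [← Finsupp.sum_id_eq_sum_univ]
    exact le_totalDegree (lmon_mem_support ord hf)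

lemma totalDegree_le_sum_lmon
    (hgraded : ∀ a b : Fin m →₀ ℕ, ord.le a b → (∑ x, a x) ≤ ∑ x, b x)
    (f : MvPolynomial (Fin m) K) :
    f.totalDegree ≤ ∑ x, lmon ord f x :=
  Finset.sup_le fun s hs => by
    rw [Finsupp.sum_id_eq_sum_univ]
    exact hgraded _ _ (le_lmon ord hs)

lemma totalDegree_monomial_mul_le (s : Fin m →₀ ℕ) (c : K) (f : MvPolynomial (Fin m) K) :
    (monomial s c * f).totalDegree ≤ ∑ x, s x + f.totalDegree := by
  refine (totalDegree_mul _ _).trans (add_le_add_left ?_ _)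
  rw [← Finsupp.sum_id_eq_sum_univ]
  exact totalDegree_monomial_le s c

lemma sum_sup_tsub_le (α β : Fin m →₀ ℕ) : ∑ x, ((α ⊔ β) - α) x ≤ ∑ x, β x :=
  Finset.sum_le_sum fun x _ => by
    rw [Finsupp.tsub_apply, Finsupp.sup_apply]
    omega

lemma totalDegree_spoly_le (p q : MvPolynomial (Fin m) K) :
    (spoly ord p q).totalDegree ≤ p.totalDegree + q.totalDegree := by
  have hp := sum_lmon_le_totalDegree ord p
  have hq := sum_lmon_le_totalDegree ord q
  refine (totalDegree_sub _ _).trans (max_le ?_ ?_)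
  · have := sum_sup_tsub_le (lmon ord p) (lmon ord q)
    have := totalDegree_monomial_mul_le
      ((lmon ord p ⊔ lmon ord q) - lmon ord p) (p.coeff (lmon ord p))⁻¹ p
    omega
  · have := sup_comm (lmon ord p) (lmon ord q) ▸ sum_sup_tsub_le (lmon ord q) (lmon ord p)
    have := totalDegree_monomial_mul_le
      ((lmon ord p ⊔ lmon ord q) - lmon ord q) (q.coeff (lmon ord q))⁻¹ q
    omega

lemma IsRemainder.totalDegree_le
    (hgraded : ∀ a b : Fin m →₀ ℕ, ord.le a b → (∑ x, a x) ≤ ∑ x, b x)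
    {f r : MvPolynomial (Fin m) K} {B : Finset (MvPolynomial (Fin m) K)}
    (h : IsRemainder ord f B r) :
    r.totalDegree ≤ f.totalDegree := by
  obtain ⟨a, heq, hle, -⟩ := h
  have hterm : ∀ g ∈ B, (a g * g).totalDegree ≤ f.totalDegree := by
    intro g hg
    by_cases h0 : a g * g = 0
    · simp [h0]
    · calc (a g * g).totalDegree ≤ ∑ x, lmon ord (a g * g) x :=
            totalDegree_le_sum_lmon ord hgraded _
        _ ≤ ∑ x, lmon ord f x := hgraded _ _ (hle g hg h0)
        _ ≤ f.totalDegree := sum_lmon_le_totalDegree ord f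
  rw [eq_sub_of_add_eq' heq.symm]
  exact (totalDegree_sub _ _).trans (max_le le_rfl (totalDegree_finsetSum_le hterm))

lemma IsRemainder.not_lmon_le {f r g : MvPolynomial (Fin m) K}
    {B : Finset (MvPolynomial (Fin m) K)} (h : IsRemainder ord f B r) (hr : r ≠ 0)
    (hg : g ∈ B) (hg0 : g ≠ 0) :
    ¬ lmon ord g ≤ lmon ord r := by
  obtain ⟨-, -, -, hred⟩ := h
  exact hred g hg hg0 _ (lmon_mem_support ord hr)

lemma ltIdeal_mono {A A' : Finset (MvPolynomial (Fin m) K)} (h : A ⊆ A') :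
    ltIdeal ord A ≤ ltIdeal ord A' :=
  Ideal.span_mono (Set.image_mono (Finset.coe_subset.mpr h))

lemma exists_mem_not_mem_of_ltIdeal_lt {A A' : Finset (MvPolynomial (Fin m) K)}
    (h : ltIdeal ord A < ltIdeal ord A') :
    ∃ b ∈ A', b ∉ A :=
  Finset.not_subset.mp fun hsub => h.not_ge (ltIdeal_mono ord hsub)

end LeadingMonomial

section Buchberger

variable {K : Type*} [Field K] {m : ℕ} (ord : LinearOrder (Fin m →₀ ℕ))

def IsBuchbergerSeq (B : ℕ → Finset (MvPolynomial (Fin m) K)) : Prop :=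
  ∀ (n : ℕ) (b : MvPolynomial (Fin m) K),
    b ∈ B (n + 1) ↔ b ∈ B n ∨
      (b ≠ 0 ∧ ∃ p ∈ B n, ∃ q ∈ B n, IsRemainder ord (spoly ord p q) (B n) b)

variable {ord} {B : ℕ → Finset (MvPolynomial (Fin m) K)}

lemma IsBuchbergerSeq.monotone (hB : IsBuchbergerSeq ord B) : Monotone B :=
  monotone_nat_of_le_succ fun n b hb => (hB n b).mpr (Or.inl hb)

lemma IsBuchbergerSeq.isRemainder_of_mem_sdiff (hB : IsBuchbergerSeq ord B) {n : ℕ}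
    {b : MvPolynomial (Fin m) K} (hb : b ∈ B (n + 1)) (hbn : b ∉ B n) :
    b ≠ 0 ∧ ∃ p ∈ B n, ∃ q ∈ B n, IsRemainder ord (spoly ord p q) (B n) b :=
  ((hB n b).mp hb).resolve_left hbn

lemma IsBuchbergerSeq.totalDegree_le (hB : IsBuchbergerSeq ord B)
    (hgraded : ∀ a b : Fin m →₀ ℕ, ord.le a b → (∑ x, a x) ≤ ∑ x, b x)
    {d : ℕ} (h0 : ∀ b ∈ B 0, b.totalDegree ≤ d) :
    ∀ n, ∀ b ∈ B n, b.totalDegree ≤ 3 ^ n * d := by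
  intro n
  induction n with
  | zero => simpa using h0
  | succ n ih =>
    intro b hb
    have hpow : 3 ^ (n + 1) * d = 3 ^ n * d + 2 * (3 ^ n * d) := by ring
    rcases (hB n b).mp hb with hbn | ⟨-, p, hp, q, hq, hrem⟩
    · exact (ih b hbn).trans (by omega)
    · have := hrem.totalDegree_le ord hgraded
      have := totalDegree_spoly_le ord p q
      have := ih p hp
      have := ih q hq
      omega

lemma IsBuchbergerSeq.exists_lmon_antichain (hB : IsBuchbergerSeq ord B) {r : ℕ}
    (hstrict : ∀ n < r, ltIdeal ord (B n) < ltIdeal ord (B (n + 1)))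
    {f₀ : MvPolynomial (Fin m) K} (hf₀ : f₀ ∈ B 0) (hf₀0 : f₀ ≠ 0) :
    ∃ g : ℕ → MvPolynomial (Fin m) K, (∀ k ≤ r, g k ∈ B k) ∧
      ∀ i j, i < j → j ≤ r → ¬ lmon ord (g i) ≤ lmon ord (g j) := by
  have hnew : ∀ n, ∃ b, n < r → b ∈ B (n + 1) ∧ b ∉ B n := fun n => by
    by_cases hn : n < r
    · obtain ⟨b, hb, hbn⟩ := exists_mem_not_mem_of_ltIdeal_lt ord (hstrict n hn)
      exact ⟨b, fun _ => ⟨hb, hbn⟩⟩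
    · exact ⟨0, fun h => absurd h hn⟩
  choose c hc using hnew
  let g : ℕ → MvPolynomial (Fin m) K := fun k => Nat.casesOn k f₀ c
  have hmem : ∀ k ≤ r, g k ∈ B k
    | 0, _ => hf₀
    | k + 1, hk => (hc k hk).1
  have hne : ∀ k ≤ r, g k ≠ 0
    | 0, _ => hf₀0
    | k + 1, hk => (hB.isRemainder_of_mem_sdiff (hc k hk).1 (hc k hk).2).1
  refine ⟨g, hmem, fun i j hij hj => ?_⟩
  obtain ⟨k, rfl⟩ : ∃ k, j = k + 1 := Nat.exists_eq_add_one_of_ne_zero (by omega)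
  obtain ⟨hck, p, -, q, -, hrem⟩ := hB.isRemainder_of_mem_sdiff (hc k hj).1 (hc k hj).2
  exact hrem.not_lmon_le ord hck (hB.monotone (by omega : i ≤ k) (hmem i (by omega)))
    (hne i (by omega))

end Buchberger

lemma succ_le_of_antichain {m r N : ℕ} {h : ℕ → ℕ}
    (hbound : ∀ (u : ℕ) (γ : Fin u → (Fin m → ℕ)),
      (∀ i j : Fin u, i < j → ¬ γ i ≤ γ j) → (∀ i : Fin u, (∑ k, γ i k) ≤ h (i.1 + 1)) → u ≤ N)
    (γ : ℕ → (Fin m →₀ ℕ)) (hanti : ∀ i j, i < j → j ≤ r → ¬ γ i ≤ γ j)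
    (hdeg : ∀ i ≤ r, ∑ k, γ i k ≤ h (i + 1)) :
    r + 1 ≤ N :=
  hbound (r + 1) (fun i => γ i)
    (fun i j hij => hanti i j hij (Nat.lt_succ_iff.mp j.2))
    fun i => hdeg i (Nat.lt_succ_iff.mp i.2)

theorem stmt_15_general {K : Type*} [Field K] (m : ℕ)
    (ord : LinearOrder (Fin m →₀ ℕ))
    (hgraded : ∀ a b : Fin m →₀ ℕ, ord.le a b → (∑ x, a x) ≤ ∑ x, b x)
    (d : ℕ) (hd : 1 ≤ d)
    (F : Finset (MvPolynomial (Fin m) K)) (hF0 : (0 : MvPolynomial (Fin m) K) ∉ F)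
    (hFd : ∀ g ∈ F, g.totalDegree ≤ d)
    (B : ℕ → Finset (MvPolynomial (Fin m) K))
    (hB0 : B 0 = F)
    (hstep : ∀ (n : ℕ) (b : MvPolynomial (Fin m) K),
      b ∈ B (n + 1) ↔ b ∈ B n ∨
        (b ≠ 0 ∧ ∃ p ∈ B n, ∃ q ∈ B n, IsRemainder ord (spoly ord p q) (B n) b))
    (r : ℕ)
    -- the chain ⟨LT(B₀)⟩ ⊊ ⟨LT(B₁)⟩ ⊊ ... ⊊ ⟨LT(B_r)⟩ is strictly ascending
    (hstrict : ∀ n < r, ltIdeal ord (B n) < ltIdeal ord (B (n + 1)))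
    -- Bd has the bounding property for antichains in ℕ^m
    (Bd : ℕ → (ℕ → ℕ) → ℕ)
    (hBd : ∀ h : ℕ → ℕ, (∀ n, 1 ≤ h n) → Monotone h →
      ∀ (u : ℕ) (γ : Fin u → (Fin m → ℕ)),
        (∀ i j : Fin u, i < j → ¬ γ i ≤ γ j) →
        (∀ i : Fin u, (∑ k, γ i k) ≤ h (i.1 + 1)) →
        u ≤ Bd m h) :
    r + 1 ≤ Bd m (fun n => 3 ^ n * d) := by
  have hB : IsBuchbergerSeq ord B := hstep
  have hmono : Monotone fun n => 3 ^ n * d := fun a b hab =>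
    Nat.mul_le_mul_right d (Nat.pow_le_pow_right (by norm_num) hab)
  have hbound := hBd _ (fun n => Nat.one_le_iff_ne_zero.mpr (by positivity)) hmono
  rcases F.eq_empty_or_nonempty with hFe | ⟨f₀, hf₀⟩
  · obtain rfl : r = 0 := by
      by_contra hr
      obtain ⟨b, hb, hb0⟩ := exists_mem_not_mem_of_ltIdeal_lt ord (hstrict 0 (by omega))
      obtain ⟨-, p, hp, -⟩ := hB.isRemainder_of_mem_sdiff hb hb0
      simp [hB0, hFe] at hp
    exact succ_le_of_antichain (h := fun n => 3 ^ n * d) hbound 0 (by omega) (by simp)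
  · obtain ⟨g, hmem, hanti⟩ :=
      hB.exists_lmon_antichain hstrict (hB0 ▸ hf₀) (ne_of_mem_of_not_mem hf₀ hF0)
    have hdeg := hB.totalDegree_le hgraded (hB0 ▸ hFd)
    refine succ_le_of_antichain (h := fun n => 3 ^ n * d) hbound (fun i => lmon ord (g i)) hanti fun i hi => ?_
    calc ∑ k, lmon ord (g i) k ≤ (g i).totalDegree := sum_lmon_le_totalDegree ord _
      _ ≤ 3 ^ i * d := hdeg i _ (hmem i hi)
      _ ≤ 3 ^ (i + 1) * d := hmono i.le_succ

theorem stmt_15 {K : Type*} [Field K] (m : ℕ) (hm : 1 ≤ m)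
    (ord : LinearOrder (Fin m →₀ ℕ))
    (hzero : ∀ a : Fin m →₀ ℕ, ord.le 0 a)
    (hadd : ∀ a b c : Fin m →₀ ℕ, ord.le a b → ord.le (a + c) (b + c))
    (hgraded : ∀ a b : Fin m →₀ ℕ, ord.le a b → (∑ x, a x) ≤ ∑ x, b x)
    (d : ℕ) (hd : 1 ≤ d)
    (F : Finset (MvPolynomial (Fin m) K)) (hF0 : (0 : MvPolynomial (Fin m) K) ∉ F)
    (hFd : ∀ g ∈ F, g.totalDegree ≤ d)
    (B : ℕ → Finset (MvPolynomial (Fin m) K))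
    (hB0 : B 0 = F)
    (hstep : ∀ (n : ℕ) (b : MvPolynomial (Fin m) K),
      b ∈ B (n + 1) ↔ b ∈ B n ∨
        (b ≠ 0 ∧ ∃ p ∈ B n, ∃ q ∈ B n, IsRemainder ord (spoly ord p q) (B n) b))
    (r : ℕ)
    -- the chain ⟨LT(B₀)⟩ ⊊ ⟨LT(B₁)⟩ ⊊ ... ⊊ ⟨LT(B_r)⟩ is strictly ascending
    (hstrict : ∀ n < r, ltIdeal ord (B n) < ltIdeal ord (B (n + 1)))
    -- B_r is a Gröbner basis of ⟨F⟩: it is contained in ⟨F⟩ and the leading monomial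
    -- of every nonzero element of ⟨F⟩ is divisible by some lm(g), g ∈ B_r
    (hGB : (↑(B r) : Set (MvPolynomial (Fin m) K)) ⊆
        (Ideal.span (F : Set (MvPolynomial (Fin m) K)) : Set (MvPolynomial (Fin m) K)) ∧
      ∀ p ∈ Ideal.span (F : Set (MvPolynomial (Fin m) K)), p ≠ 0 →
        ∃ g ∈ B r, g ≠ 0 ∧ lmon ord g ≤ lmon ord p)
    -- Bd has the bounding property for antichains in ℕ^m
    (Bd : ℕ → (ℕ → ℕ) → ℕ)
    (hBd : ∀ h : ℕ → ℕ, (∀ n, 1 ≤ h n) → Monotone h →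
      ∀ (u : ℕ) (γ : Fin u → (Fin m → ℕ)),
        (∀ i j : Fin u, i < j → ¬ γ i ≤ γ j) →
        (∀ i : Fin u, (∑ k, γ i k) ≤ h (i.1 + 1)) →
        u ≤ Bd m h) :
    r + 1 ≤ Bd m (fun n => 3 ^ n * d) :=
  stmt_15_general m ord hgraded d hd F hF0 hFd B hB0 hstep r hstrict Bd hBd
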